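/- arXiv:1104.0609 — 2 statements merged into one kernel-verified Lean document; each statement's English description precedes it below -/
import Mathlib

section
/- For every positive integer s, the continued fraction [3s+1; 2, 1, 3s, 1, 2, 6s+2 repeated] equals √((3s+1)² + 2s + 1). -/
/-- The value of a finite continued fraction [x₀; x₁, ..., xₙ]. -/
noncomputable def cfFinite : List ℝ → ℝ
  | [] => 0
  | [x] => x
  | x :: y :: xs => x + (cfFinite (y :: xs))⁻¹

/-- The eventually periodic sequence with initial term `a₀` and repeating block `L`. -/
def periodicSeq (a₀ : ℕ) (L : List ℕ) : ℕ → ℕ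
  | 0 => a₀
  | n + 1 => L.getD (n % L.length) 0

/-- `x` is the value of the infinite continued fraction with partial quotients `a`,
i.e. the limit of the finite convergents. -/
def cfValue (a : ℕ → ℕ) (x : ℝ) : Prop :=
  Filter.Tendsto
    (fun n => cfFinite (((List.range (n + 1)).map a).map (fun k : ℕ => (k : ℝ))))
    Filter.atTop (nhds x)

/-- `x` is the value of the infinite periodic continued fraction
`[a₀; L repeated]`. -/
def IsPeriodicCF (a₀ : ℕ) (L : List ℕ) (x : ℝ) : Prop :=
  cfValue (periodicSeq a₀ L) x

/-- `P` is the minimal period length of the continued fraction expansion of `√D`. -/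
def IsMinPeriodCF (D P : ℕ) : Prop :=
  0 < P ∧
  (∃ L : List ℕ, L.length = P ∧ IsPeriodicCF (Nat.sqrt D) L (Real.sqrt D)) ∧
  ∀ Q : ℕ, 0 < Q → Q < P →
    ¬ ∃ L : List ℕ, L.length = Q ∧ IsPeriodicCF (Nat.sqrt D) L (Real.sqrt D)

/-! ### Auxiliary lemmas on `cfFinite` -/

lemma cfFinite_cons (x : ℝ) (M : List ℝ) (h : M ≠ []) :
    cfFinite (x :: M) = x + (cfFinite M)⁻¹ := by
  cases M with
  | nil => exact absurd rfl h
  | cons y ys => rfl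

lemma cfFinite_bounds {B : ℝ} :
    ∀ L : List ℝ, L ≠ [] → (∀ x ∈ L, 1 ≤ x ∧ x ≤ B) →
      1 ≤ cfFinite L ∧ cfFinite L ≤ B + 1 := by
  intro L
  induction L with
  | nil => simp
  | cons x M ih =>
    intro _ hmem
    obtain ⟨hx1, hxB⟩ := hmem x (by simp)
    cases M with
    | nil => exact ⟨by simpa [cfFinite] using hx1, by simp [cfFinite]; linarith⟩
    | cons y ys =>
      obtain ⟨h1, h2⟩ := ih (by simp) (fun z hz => hmem z (by simp [hz]))
      have hpos : (0:ℝ) < cfFinite (y :: ys) := by linarith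
      have he : cfFinite (x :: y :: ys) = x + (cfFinite (y :: ys))⁻¹ := rfl
      have hi1 : (cfFinite (y :: ys))⁻¹ ≤ 1 := by
        rw [inv_le_one_iff₀]; right; exact h1
      have hi0 : 0 < (cfFinite (y :: ys))⁻¹ := by positivity
      exact ⟨by rw [he]; linarith, by rw [he]; linarith⟩

lemma cfFinite_lb {B : ℝ} (hB : 1 ≤ B) {L : List ℝ} (hL : L ≠ [])
    (hmem : ∀ x ∈ L, 1 ≤ x ∧ x ≤ B) {z : ℝ} (hz1 : 1 ≤ z) (hzB : z ≤ B) :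
    1 + 1/(B+1) ≤ cfFinite (L ++ [z]) := by
  cases L with
  | nil => exact absurd rfl hL
  | cons x M =>
    have hmem' : ∀ y ∈ M ++ [z], 1 ≤ y ∧ y ≤ B := by
      intro y hy
      rcases List.mem_append.1 hy with h | h
      · exact hmem y (by simp [h])
      · simp at h; subst h; exact ⟨hz1, hzB⟩
    obtain ⟨h1, h2⟩ := cfFinite_bounds (M ++ [z]) (by simp) hmem'
    have hpos : (0:ℝ) < cfFinite (M ++ [z]) := by linarith
    have hB1 : (0:ℝ) < B + 1 := by linarith
    rw [show ((x :: M) ++ [z]) = x :: (M ++ [z]) by rfl,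
      cfFinite_cons x (M ++ [z]) (by simp)]
    have : 1/(B+1) ≤ (cfFinite (M ++ [z]))⁻¹ := by
      rw [one_div]
      exact inv_anti₀ hpos h2
    have hx1 := (hmem x (by simp)).1
    linarith

lemma cfFinite_contract {B : ℝ} (hB : 1 ≤ B) :
    ∀ L : List ℝ, (∀ x ∈ L, 1 ≤ x ∧ x ≤ B) →
      ∀ z w : ℝ, 1 ≤ z → z ≤ B → 1 ≤ w → w ≤ B →
      |cfFinite (L ++ [z]) - cfFinite (L ++ [w])| ≤
        |z - w| * (1/(1 + 1/(B+1)))^(L.length - 1) := by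
  have hB1 : (0:ℝ) < B + 1 := by linarith
  have hc : (1:ℝ) < 1 + 1/(B+1) := by
    have : (0:ℝ) < 1/(B+1) := by positivity
    linarith
  have hr1 : 1/(1 + 1/(B+1)) ≤ 1 := by
    rw [div_le_one (by linarith)]; linarith
  have hr0 : (0:ℝ) < 1/(1 + 1/(B+1)) := by positivity
  intro L
  induction L with
  | nil =>
    intro _ z w hz1 hzB hw1 hwB
    simp [cfFinite]
  | cons x M ih =>
    intro hmem z w hz1 hzB hw1 hwB
    have hmz : ∀ y ∈ M ++ [z], 1 ≤ y ∧ y ≤ B := by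
      intro y hy
      rcases List.mem_append.1 hy with h | h
      · exact hmem y (by simp [h])
      · simp at h; subst h; exact ⟨hz1, hzB⟩
    have hmw : ∀ y ∈ M ++ [w], 1 ≤ y ∧ y ≤ B := by
      intro y hy
      rcases List.mem_append.1 hy with h | h
      · exact hmem y (by simp [h])
      · simp at h; subst h; exact ⟨hw1, hwB⟩
    have ez : cfFinite ((x :: M) ++ [z]) = x + (cfFinite (M ++ [z]))⁻¹ :=
      cfFinite_cons x (M ++ [z]) (by simp)
    have ew : cfFinite ((x :: M) ++ [w]) = x + (cfFinite (M ++ [w]))⁻¹ :=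
      cfFinite_cons x (M ++ [w]) (by simp)
    obtain ⟨hz1', hz2'⟩ := cfFinite_bounds (M ++ [z]) (by simp) hmz
    obtain ⟨hw1', hw2'⟩ := cfFinite_bounds (M ++ [w]) (by simp) hmw
    set Vz := cfFinite (M ++ [z]) with hVz
    set Vw := cfFinite (M ++ [w]) with hVw
    have hVzpos : (0:ℝ) < Vz := by linarith
    have hVwpos : (0:ℝ) < Vw := by linarith
    have key : |cfFinite ((x :: M) ++ [z]) - cfFinite ((x :: M) ++ [w])| =
        |Vz - Vw| / (Vz * Vw) := by
      rw [ez, ew]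
      rw [add_sub_add_left_eq_sub]
      rw [inv_sub_inv (ne_of_gt hVzpos) (ne_of_gt hVwpos)]
      rw [abs_div, abs_sub_comm]
      congr 1
      exact abs_of_pos (by positivity)
    rw [key]
    cases M with
    | nil =>
      have eVz : Vz = z := by simp [hVz, cfFinite]
      have eVw : Vw = w := by simp [hVw, cfFinite]
      rw [eVz, eVw]
      have hzw : (1:ℝ) ≤ z * w := by nlinarith
      have h1 : |z - w| / (z * w) ≤ |z - w| := by
        rw [div_le_iff₀ (by positivity)]
        nlinarith [abs_nonneg (z - w), hzw]
      simpa using h1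
    | cons y ys =>
      have hmem' : ∀ u ∈ (y :: ys), 1 ≤ u ∧ u ≤ B := fun u hu => hmem u (by simp [hu])
      have lbz : 1 + 1/(B+1) ≤ Vz := cfFinite_lb hB (by simp) hmem' hz1 hzB
      have lbw : 1 + 1/(B+1) ≤ Vw := cfFinite_lb hB (by simp) hmem' hw1 hwB
      have ihb := ih hmem' z w hz1 hzB hw1 hwB
      set c := 1 + 1/(B+1) with hcdef
      have hcpos : (0:ℝ) < c := by linarith
      clear_value c
      simp only [List.length_cons, Nat.add_sub_cancel] at ihb ⊢
      have step : |Vz - Vw| / (Vz * Vw) ≤ |Vz - Vw| / (c * c) := by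
        apply div_le_div_of_nonneg_left (abs_nonneg _) (by positivity)
        nlinarith
      have step2 : |Vz - Vw| / (c * c) ≤ (|z - w| * (1/c)^ys.length) / (c * c) :=
        div_le_div_of_nonneg_right ihb (by positivity)
      have e : |z - w| * (1/c)^ys.length / (c*c) = |z - w| * (1/c)^(ys.length+2) := by
        rw [pow_add]
        ring
      have mono : (1/c:ℝ)^(ys.length+2) ≤ (1/c)^(ys.length+1) :=
        pow_le_pow_of_le_one (le_of_lt hr0) hr1 (by omega)
      calc |Vz - Vw| / (Vz * Vw) ≤ |Vz - Vw| / (c * c) := step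
        _ ≤ |z - w| * (1/c)^ys.length / (c*c) := step2
        _ = |z - w| * (1/c)^(ys.length+2) := e
        _ ≤ |z - w| * (1/c)^(ys.length+1) :=
            mul_le_mul_of_nonneg_left mono (abs_nonneg _)

lemma cfFinite_tail (a : ℕ → ℕ) (t : ℕ → ℝ)
    (ht : ∀ n, t n = a n + (t (n+1))⁻¹) :
    ∀ n k, cfFinite ((List.range' k n).map (fun i => (a i : ℝ)) ++ [t (k+n)]) = t k := by
  intro n
  induction n with
  | zero => intro k; simp [cfFinite]
  | succ m ih =>
    intro k
    rw [List.range'_succ]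
    have : ((k :: List.range' (k+1) m).map (fun i => (a i : ℝ)) ++ [t (k+(m+1))]) =
        (a k : ℝ) :: ((List.range' (k+1) m).map (fun i => (a i : ℝ)) ++ [t ((k+1)+m)]) := by
      simp [List.map_cons]
      ring_nf
    rw [this, cfFinite_cons _ _ (by simp), ih (k+1), ← ht k]

lemma cfValue_of_tails (B : ℝ) (hB : 1 ≤ B) (a : ℕ → ℕ) (t : ℕ → ℝ)
    (ha1 : ∀ n, 1 ≤ (a n : ℝ)) (haB : ∀ n, (a n : ℝ) + 1 ≤ B)
    (ht : ∀ n, t n = a n + (t (n+1))⁻¹)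
    (htpos : ∀ n, 0 < t n) :
    cfValue a (t 0) := by
  have ht1 : ∀ n, 1 ≤ t n := by
    intro n
    have := ht n
    have hpos := htpos (n+1)
    have : (a n : ℝ) ≤ t n := by
      rw [ht n]
      have : 0 < (t (n+1))⁻¹ := inv_pos.mpr (htpos _)
      linarith
    linarith [ha1 n]
  have htB : ∀ n, t n ≤ B := by
    intro n
    rw [ht n]
    have h1 : (t (n+1))⁻¹ ≤ 1 := by
      rw [inv_le_one_iff₀]; right; exact ht1 (n+1)
    linarith [haB n]
  set c : ℝ := 1 + 1/(B+1) with hcdef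
  have hB1 : (0:ℝ) < B + 1 := by linarith
  have hc : (1:ℝ) < c := by
    have : (0:ℝ) < 1/(B+1) := by positivity
    simp only [hcdef]; linarith
  have hr0 : (0:ℝ) ≤ 1/c := by positivity
  have hr1 : 1/c < 1 := by
    rw [div_lt_one (by linarith)]; exact hc
  have key : ∀ n, |cfFinite (((List.range (n + 1)).map a).map (fun k : ℕ => (k : ℝ))) - t 0|
      ≤ (1/c)^(n-1) := by
    intro n
    have hsplit : ((List.range (n + 1)).map a).map (fun k : ℕ => (k : ℝ))
        = ((List.range n).map (fun i => (a i : ℝ))) ++ [(a n : ℝ)] := by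
      rw [List.range_succ]
      simp
    have hmem : ∀ x ∈ (List.range n).map (fun i => (a i : ℝ)), 1 ≤ x ∧ x ≤ B := by
      intro x hx
      simp only [List.mem_map] at hx
      obtain ⟨i, _, rfl⟩ := hx
      exact ⟨ha1 i, by linarith [haB i]⟩
    have hx0 : t 0 = cfFinite ((List.range n).map (fun i => (a i : ℝ)) ++ [t n]) := by
      have := cfFinite_tail a t ht n 0
      rw [List.range_eq_range']
      simpa using this.symm
    have hcontr := cfFinite_contract hB ((List.range n).map (fun i => (a i : ℝ))) hmem
      (a n) (t n) (ha1 n) (by linarith [haB n]) (ht1 n) (htB n)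
    rw [hsplit, hx0]
    have hlen : ((List.range n).map (fun i => (a i : ℝ))).length = n := by simp
    rw [hlen] at hcontr
    have hdiff : |(a n : ℝ) - t n| ≤ 1 := by
      rw [ht n]
      have h1 : 0 < (t (n+1))⁻¹ := inv_pos.mpr (htpos _)
      have h2 : (t (n+1))⁻¹ ≤ 1 := by
        rw [inv_le_one_iff₀]; right; exact ht1 (n+1)
      rw [abs_sub_comm]
      rw [abs_of_pos (by linarith)]
      linarith
    calc |cfFinite ((List.range n).map (fun i => (a i : ℝ)) ++ [(a n : ℝ)]) -
          cfFinite ((List.range n).map (fun i => (a i : ℝ)) ++ [t n])|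
        ≤ |(a n : ℝ) - t n| * (1/c)^(n-1) := by rw [← hcdef] at hcontr; exact hcontr
      _ ≤ 1 * (1/c)^(n-1) := mul_le_mul_of_nonneg_right hdiff (pow_nonneg hr0 _)
      _ = (1/c)^(n-1) := one_mul _
  rw [cfValue]
  rw [tendsto_iff_dist_tendsto_zero]
  have hgeo : Filter.Tendsto (fun n : ℕ => (1/c)^(n-1)) Filter.atTop (nhds 0) := by
    have h1 : Filter.Tendsto (fun m : ℕ => (1/c)^m) Filter.atTop (nhds 0) :=
      tendsto_pow_atTop_nhds_zero_of_lt_one hr0 hr1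
    exact h1.comp (Filter.tendsto_sub_atTop_nat 1)
  apply squeeze_zero (fun n => dist_nonneg) _ hgeo
  intro n
  rw [Real.dist_eq]
  exact key n

/-! ### The specific continued fraction -/

noncomputable def cfTail (s : ℕ) : ℕ → ℝ
  | 0 => Real.sqrt (((3 * s + 1) ^ 2 + 2 * s + 1 : ℕ))
  | n + 1 =>
    if n % 6 = 0 then (Real.sqrt (((3 * s + 1) ^ 2 + 2 * s + 1 : ℕ)) + (3 * s + 1)) / (2 * s + 1)
    else if n % 6 = 1 then (Real.sqrt (((3 * s + 1) ^ 2 + 2 * s + 1 : ℕ)) + (s + 1)) / (4 * s + 1)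
    else if n % 6 = 2 then (Real.sqrt (((3 * s + 1) ^ 2 + 2 * s + 1 : ℕ)) + 3 * s) / 2
    else if n % 6 = 3 then (Real.sqrt (((3 * s + 1) ^ 2 + 2 * s + 1 : ℕ)) + 3 * s) / (4 * s + 1)
    else if n % 6 = 4 then (Real.sqrt (((3 * s + 1) ^ 2 + 2 * s + 1 : ℕ)) + (s + 1)) / (2 * s + 1)
    else Real.sqrt (((3 * s + 1) ^ 2 + 2 * s + 1 : ℕ)) + (3 * s + 1)

lemma cfTail_pos (s : ℕ) (n : ℕ) : 0 < cfTail s n := by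
  have hq : 0 < Real.sqrt (((3 * s + 1) ^ 2 + 2 * s + 1 : ℕ)) := by
    apply Real.sqrt_pos.mpr
    positivity
  cases n with
  | zero => simpa [cfTail] using hq
  | succ m =>
    rw [cfTail]
    split_ifs <;> positivity

lemma cfTail_rec (s : ℕ) (hs : 0 < s) (n : ℕ) :
    cfTail s n = (periodicSeq (3 * s + 1) [2, 1, 3 * s, 1, 2, 6 * s + 2] n : ℕ)
      + (cfTail s (n + 1))⁻¹ := by
  set q := Real.sqrt (((3 * s + 1) ^ 2 + 2 * s + 1 : ℕ)) with hqdef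
  have hq2 : q ^ 2 = 9 * (s:ℝ)^2 + 8 * s + 2 := by
    rw [hqdef, Real.sq_sqrt (by positivity)]
    push_cast
    ring
  have hq0 : 0 < q := Real.sqrt_pos.mpr (by positivity)
  have hs1 : (1:ℝ) ≤ s := by exact_mod_cast hs
  cases n with
  | zero =>
    have h1 : cfTail s 1 = (q + (3 * s + 1)) / (2 * s + 1) := by
      rw [cfTail, ← hqdef]; norm_num
    rw [h1]
    show q = ((3 * s + 1 : ℕ) : ℝ) + _
    push_cast
    have hd : (0:ℝ) < q + (3 * s + 1) := by positivity
    field_simp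
    linear_combination hq2
  | succ m =>
    have hper : (periodicSeq (3 * s + 1) [2, 1, 3 * s, 1, 2, 6 * s + 2] (m+1) : ℕ)
        = [2, 1, 3 * s, 1, 2, 6 * s + 2].getD (m % 6) 0 := by
      simp [periodicSeq]
    have hcase : m % 6 = 0 ∨ m % 6 = 1 ∨ m % 6 = 2 ∨ m % 6 = 3 ∨ m % 6 = 4 ∨ m % 6 = 5 := by
      omega
    rcases hcase with h | h | h | h | h | h
    · have h' : (m + 1) % 6 = 1 := by omega
      have e1 : cfTail s (m+1) = (q + (3 * s + 1)) / (2 * s + 1) := by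
        rw [cfTail, ← hqdef, h]; norm_num
      have e2 : cfTail s (m+2) = (q + (s + 1)) / (4 * s + 1) := by
        rw [show m+2 = (m+1)+1 from rfl, cfTail, ← hqdef, h']; norm_num
      rw [e1, e2, hper, h]
      show _ = ((2:ℕ) : ℝ) + _
      push_cast
      have hd : (0:ℝ) < q + (s + 1) := by positivity
      field_simp
      linear_combination hq2
    · have h' : (m + 1) % 6 = 2 := by omega
      have e1 : cfTail s (m+1) = (q + (s + 1)) / (4 * s + 1) := by
        rw [cfTail, ← hqdef, h]; norm_num
      have e2 : cfTail s (m+2) = (q + 3 * s) / 2 := by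
        rw [show m+2 = (m+1)+1 from rfl, cfTail, ← hqdef, h']; norm_num
      rw [e1, e2, hper, h]
      show _ = ((1:ℕ) : ℝ) + _
      push_cast
      have hd : (0:ℝ) < q + 3 * s := by positivity
      field_simp
      linear_combination hq2
    · have h' : (m + 1) % 6 = 3 := by omega
      have e1 : cfTail s (m+1) = (q + 3 * s) / 2 := by
        rw [cfTail, ← hqdef, h]; norm_num
      have e2 : cfTail s (m+2) = (q + 3 * s) / (4 * s + 1) := by
        rw [show m+2 = (m+1)+1 from rfl, cfTail, ← hqdef, h']; norm_num
      rw [e1, e2, hper, h]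
      show _ = ((3 * s : ℕ) : ℝ) + _
      push_cast
      have hd : (0:ℝ) < q + 3 * s := by positivity
      field_simp
      linear_combination hq2
    · have h' : (m + 1) % 6 = 4 := by omega
      have e1 : cfTail s (m+1) = (q + 3 * s) / (4 * s + 1) := by
        rw [cfTail, ← hqdef, h]; norm_num
      have e2 : cfTail s (m+2) = (q + (s + 1)) / (2 * s + 1) := by
        rw [show m+2 = (m+1)+1 from rfl, cfTail, ← hqdef, h']; norm_num
      rw [e1, e2, hper, h]
      show _ = ((1:ℕ) : ℝ) + _
      push_cast
      have hd : (0:ℝ) < q + (s + 1) := by positivity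
      field_simp
      linear_combination hq2
    · have h' : (m + 1) % 6 = 5 := by omega
      have e1 : cfTail s (m+1) = (q + (s + 1)) / (2 * s + 1) := by
        rw [cfTail, ← hqdef, h]; norm_num
      have e2 : cfTail s (m+2) = q + (3 * s + 1) := by
        rw [show m+2 = (m+1)+1 from rfl, cfTail, ← hqdef, h']; norm_num
      rw [e1, e2, hper, h]
      show _ = ((2:ℕ) : ℝ) + _
      push_cast
      have hd : (0:ℝ) < q + (3 * s + 1) := by positivity
      field_simp
      linear_combination hq2
    · have h' : (m + 1) % 6 = 0 := by omega
      have e1 : cfTail s (m+1) = q + (3 * s + 1) := by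
        rw [cfTail, ← hqdef, h]; norm_num
      have e2 : cfTail s (m+2) = (q + (3 * s + 1)) / (2 * s + 1) := by
        rw [show m+2 = (m+1)+1 from rfl, cfTail, ← hqdef, h']; norm_num
      rw [e1, e2, hper, h]
      show _ = ((6 * s + 2 : ℕ) : ℝ) + _
      push_cast
      have hd : (0:ℝ) < q + (3 * s + 1) := by positivity
      field_simp
      linear_combination hq2

theorem cf_value_almost_culminating_six (s : ℕ) (hs : 0 < s) :
    IsPeriodicCF (3 * s + 1) [2, 1, 3 * s, 1, 2, 6 * s + 2]
      (Real.sqrt (((3 * s + 1) ^ 2 + 2 * s + 1 : ℕ))) := by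
  have h0 : Real.sqrt (((3 * s + 1) ^ 2 + 2 * s + 1 : ℕ)) = cfTail s 0 := rfl
  rw [IsPeriodicCF, h0]
  apply cfValue_of_tails ((6 * s + 3 : ℕ) : ℝ)
  · have : (1:ℕ) ≤ 6 * s + 3 := by omega
    exact_mod_cast this
  · intro n
    have : (1:ℕ) ≤ periodicSeq (3 * s + 1) [2, 1, 3 * s, 1, 2, 6 * s + 2] n := by
      cases n with
      | zero => simp [periodicSeq]
      | succ m =>
        have e : periodicSeq (3 * s + 1) [2, 1, 3 * s, 1, 2, 6 * s + 2] (m+1)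
            = [2, 1, 3 * s, 1, 2, 6 * s + 2].getD (m % 6) 0 := by simp [periodicSeq]
        rw [e]
        have hm : m % 6 < 6 := Nat.mod_lt _ (by norm_num)
        interval_cases h : m % 6 <;> simp <;> omega
    exact_mod_cast this
  · intro n
    have : periodicSeq (3 * s + 1) [2, 1, 3 * s, 1, 2, 6 * s + 2] n + 1 ≤ 6 * s + 3 := by
      cases n with
      | zero => simp [periodicSeq]; omega
      | succ m =>
        have e : periodicSeq (3 * s + 1) [2, 1, 3 * s, 1, 2, 6 * s + 2] (m+1)
            = [2, 1, 3 * s, 1, 2, 6 * s + 2].getD (m % 6) 0 := by simp [periodicSeq]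
        rw [e]
        have hm : m % 6 < 6 := Nat.mod_lt _ (by norm_num)
        interval_cases h : m % 6 <;> simp <;> omega
    exact_mod_cast this
  · exact cfTail_rec s hs
  · exact cfTail_pos s
end

section
/- If x₀, x₁, x₂ are positive integers satisfying 2x₀ = m(x₁²x₂ + 2x₁) - x₂(x₁x₂ + 1) for some positive integer m, then √(x₀² + m(x₁x₂ + 1) - x₂²) has the periodic continued fraction expansion [x₀; x₁, x₂, x₁, 2x₀ repeated]. -/
/-!
Put `q₁ = m (x₁x₂ + 1) - x₂²`, `q₂ = m x₁² - x₁x₂ + 1`, `p = x₁q₁ - x₀` and `D = x₀² + q₁`. The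
hypothesis on `x₀` is exactly what makes `2p = x₂q₂` and `q₁q₂ = D - p²`, so the complete quotients
`(√D + P) / Q` of `√D` run through `(P, Q) = (x₀, q₁), (p, q₂), (p, q₁), (x₀, 1)` and then repeat,
with partial quotients `x₁, x₂, x₁, 2x₀`. Integrality forces `q₁, q₂ > 0`.

No floors have to be computed: whenever `t n = a n + (t (n + 1))⁻¹` with all tails `t (n + 1)`
positive and `a (n + 1) ≥ 1`, the continuant identity `A (n + 1) B n - A n B (n + 1) = ±1` shows
that the `n`-th convergent is within `1 / (B (n + 1) B (n + 2)) ≤ 1 / (n + 1)` of `t 0`.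
-/

lemma cfFinite_cons_of_ne_nil (x : ℝ) {l : List ℝ} (hl : l ≠ []) :
    cfFinite (x :: l) = x + (cfFinite l)⁻¹ := by
  cases l with
  | nil => exact absurd rfl hl
  | cons y ys => rfl

lemma cfFinite_append_pair (L : List ℝ) (u z : ℝ) :
    cfFinite (L ++ [u, z]) = cfFinite (L ++ [u + z⁻¹]) := by
  induction L with
  | nil => rfl
  | cons x L ih =>
    rw [List.cons_append, List.cons_append, cfFinite_cons_of_ne_nil _ (by simp),
      cfFinite_cons_of_ne_nil _ (by simp), ih]

section Convergents

variable (a : ℕ → ℕ)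

noncomputable def cfPrefix (n : ℕ) : List ℝ :=
  (List.range (n + 1)).map fun k => (a k : ℝ)

/-- `cfNum a (n + 1) / cfDen a (n + 1)` is the convergent `[a 0; a 1, …, a n]`. -/
noncomputable def cfNum : ℕ → ℝ
  | 0 => 1
  | 1 => a 0
  | n + 2 => a (n + 1) * cfNum (n + 1) + cfNum n

noncomputable def cfDen : ℕ → ℝ
  | 0 => 0
  | 1 => 1
  | n + 2 => a (n + 1) * cfDen (n + 1) + cfDen n

variable {a}

lemma cfPrefix_succ (n : ℕ) : cfPrefix a (n + 1) = cfPrefix a n ++ [(a (n + 1) : ℝ)] := by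
  simp [cfPrefix, List.range_succ (n := n + 1)]

lemma cfNum_mul_cfDen_sub (n : ℕ) :
    cfNum a (n + 1) * cfDen a n - cfNum a n * cfDen a (n + 1) = (-1) ^ (n + 1) := by
  induction n with
  | zero => simp [cfNum, cfDen]
  | succ n ih =>
    simp only [cfNum, cfDen]
    linear_combination (-1 : ℝ) * ih

lemma cfDen_nonneg : ∀ n, 0 ≤ cfDen a n
  | 0 => le_rfl
  | 1 => zero_le_one
  | n + 2 => by
    have := cfDen_nonneg n
    have := cfDen_nonneg (n + 1)
    simp only [cfDen]
    positivity

lemma cfFinite_cfPrefix_append_of_eq_add_inv {t : ℕ → ℝ} (ht : ∀ n, t n = a n + (t (n + 1))⁻¹)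
    (n : ℕ) : cfFinite (cfPrefix a n ++ [t (n + 1)]) = t 0 := by
  induction n with
  | zero => exact (ht 0).symm
  | succ n ih =>
    rw [cfPrefix_succ, List.append_assoc, List.singleton_append, cfFinite_append_pair,
      ← ht (n + 1), ih]

variable (hA : ∀ n, 1 ≤ a (n + 1))
include hA

lemma one_le_cfDen : ∀ n, 1 ≤ cfDen a (n + 1)
  | 0 => le_rfl
  | n + 1 => by
    have ha : (1 : ℝ) ≤ a (n + 1) := by exact_mod_cast hA n
    have := one_le_cfDen n
    have := cfDen_nonneg (a := a) n
    simp only [cfDen]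
    nlinarith

lemma le_cfDen_mul_cfDen (n : ℕ) : (n : ℝ) + 1 ≤ cfDen a (n + 1) * cfDen a (n + 2) := by
  induction n with
  | zero => simpa [cfDen] using (show (1 : ℝ) ≤ a 1 by exact_mod_cast hA 0)
  | succ n ih =>
    have ha : (1 : ℝ) ≤ a (n + 2) := by exact_mod_cast hA (n + 1)
    have h1 := one_le_cfDen hA n
    have h2 := one_le_cfDen hA (n + 1)
    have hstep : cfDen a (n + 2) + cfDen a (n + 1) ≤ cfDen a (n + 3) := by
      show _ ≤ a (n + 2) * cfDen a (n + 2) + cfDen a (n + 1)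
      nlinarith
    push_cast
    nlinarith

lemma cfFinite_cfPrefix_append (n : ℕ) {z : ℝ} (hz : 0 < z) :
    cfFinite (cfPrefix a n ++ [z])
      = (z * cfNum a (n + 1) + cfNum a n) / (z * cfDen a (n + 1) + cfDen a n) := by
  induction n generalizing z with
  | zero =>
    show (a 0 : ℝ) + z⁻¹ = _
    simp only [cfNum, cfDen]
    field_simp
    ring
  | succ n ih =>
    have ha : (1 : ℝ) ≤ a (n + 1) := by exact_mod_cast hA n
    have hB₀ := cfDen_nonneg (a := a) n
    have hB₁ := one_le_cfDen hA n
    have hz' : 0 < (a (n + 1) : ℝ) + z⁻¹ := by positivity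
    rw [cfPrefix_succ, List.append_assoc, List.singleton_append, cfFinite_append_pair, ih hz']
    simp only [cfNum, cfDen]
    have hd : 0 < ((a (n + 1) : ℝ) + z⁻¹) * cfDen a (n + 1) + cfDen a n := by positivity
    have hd' : 0 < z * (a (n + 1) * cfDen a (n + 1) + cfDen a n) + cfDen a (n + 1) := by
      positivity
    rw [div_eq_div_iff hd.ne' hd'.ne']
    field_simp
    ring

lemma cfFinite_cfPrefix (n : ℕ) : cfFinite (cfPrefix a n) = cfNum a (n + 1) / cfDen a (n + 1) := by
  cases n with
  | zero => simp [cfPrefix, cfFinite, cfNum, cfDen]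
  | succ n =>
    rw [cfPrefix_succ, cfFinite_cfPrefix_append hA n (by exact_mod_cast hA n)]
    rfl

lemma abs_cfFinite_cfPrefix_sub_le {t : ℕ → ℝ} (hpos : ∀ n, 0 < t (n + 1))
    (ht : ∀ n, t n = a n + (t (n + 1))⁻¹) (n : ℕ) :
    |cfFinite (cfPrefix a n) - t 0| ≤ 1 / (n + 1) := by
  have hB₀ := cfDen_nonneg (a := a) n
  have hB₁ := one_le_cfDen hA n
  have hgrowth := le_cfDen_mul_cfDen hA n
  have hat : (a (n + 1) : ℝ) ≤ t (n + 1) := by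
    have := hpos (n + 1)
    rw [ht (n + 1)]
    simp only [le_add_iff_nonneg_right]
    positivity
  have hd : 0 < t (n + 1) * cfDen a (n + 1) + cfDen a n := by
    have := hpos n; positivity
  have hdiff : cfFinite (cfPrefix a n) - t 0
      = (-1) ^ (n + 1) / (cfDen a (n + 1) * (t (n + 1) * cfDen a (n + 1) + cfDen a n)) := by
    rw [cfFinite_cfPrefix hA, ← cfFinite_cfPrefix_append_of_eq_add_inv ht n,
      cfFinite_cfPrefix_append hA n (hpos n), div_sub_div _ _ (by positivity) hd.ne',
      ← cfNum_mul_cfDen_sub]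
    ring_nf
  have hden : cfDen a (n + 1) * cfDen a (n + 2)
      ≤ cfDen a (n + 1) * (t (n + 1) * cfDen a (n + 1) + cfDen a n) := by
    show _ * (a (n + 1) * cfDen a (n + 1) + cfDen a n) ≤ _
    gcongr
  rw [hdiff, abs_div, abs_pow, abs_neg, abs_one, one_pow, abs_of_pos (by positivity)]
  gcongr
  exact hgrowth.trans hden

theorem cfValue_of_eq_add_inv {t : ℕ → ℝ} (hpos : ∀ n, 0 < t (n + 1))
    (ht : ∀ n, t n = a n + (t (n + 1))⁻¹) : cfValue a (t 0) := by
  rw [cfValue, tendsto_iff_dist_tendsto_zero]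
  refine squeeze_zero (fun _ => dist_nonneg) (fun n => ?_) tendsto_one_div_add_atTop_nhds_zero_nat
  rw [List.map_map, Real.dist_eq]
  exact abs_cfFinite_cfPrefix_sub_le hA hpos ht n

end Convergents

lemma List.getD_mod_length_mem {α : Type*} (l : List α) (hl : l ≠ []) (d : α) (n : ℕ) :
    l.getD (n % l.length) d ∈ l := by
  rw [List.getD_eq_getElem _ _ (Nat.mod_lt _ (List.length_pos_of_ne_nil hl))]
  exact List.getElem_mem _

/-- `T` lists the complete quotients of one period. -/
theorem isPeriodicCF_of_eq_add_inv (a₀ : ℕ) (L : List ℕ) (T : List ℝ) {x : ℝ}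
    (hL : L ≠ []) (hlen : T.length = L.length) (hLpos : ∀ k ∈ L, 1 ≤ k) (hTpos : ∀ τ ∈ T, 0 < τ)
    (hx : x = a₀ + (T.getD 0 0)⁻¹)
    (hT : ∀ i < L.length, T.getD i 0 = L.getD i 0 + (T.getD ((i + 1) % L.length) 0)⁻¹) :
    IsPeriodicCF a₀ L x := by
  have hT' : T ≠ [] := by
    rw [← List.length_pos_iff, hlen]; exact List.length_pos_of_ne_nil hL
  let t : ℕ → ℝ
    | 0 => x
    | n + 1 => T.getD (n % L.length) 0
  refine cfValue_of_eq_add_inv (t := t) (fun n => hLpos _ (List.getD_mod_length_mem L hL 0 n))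
    (fun n => hTpos _ (by simpa only [t, hlen] using List.getD_mod_length_mem T hT' 0 n)) ?_
  rintro (_ | n)
  · simpa [t, periodicSeq] using hx
  · simp only [t, periodicSeq]
    rw [hT _ (Nat.mod_lt _ (List.length_pos_of_ne_nil hL)), Nat.mod_add_mod]

/-- One step of the continued fraction algorithm on a quadratic surd `(√D + P) / Q`, where
`α = √D`: the next complete quotient is `(√D + P') / Q'` with `P' = c Q - P`, `Q Q' = D - P'²`. -/
lemma add_div_eq_add_inv_add_div {α P Q c P' Q' : ℝ} (hQ : Q ≠ 0) (hP' : α + P' ≠ 0)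
    (hstep : P' = c * Q - P) (hnorm : Q * Q' = α ^ 2 - P' ^ 2) :
    (α + P) / Q = c + ((α + P') / Q')⁻¹ := by
  have hinv : ((α + P') / Q')⁻¹ = (α - P') / Q := by
    rw [inv_div, div_eq_div_iff hP' hQ]
    linear_combination hnorm
  rw [hinv, hstep]
  field_simp
  ring

section Positivity

variable {a b c m : ℤ} (ha : 0 ≤ a) (hb : 0 ≤ b) (hc : 0 < c)
  (h : 2 * a = m * (b ^ 2 * c + 2 * b) - c * (b * c + 1))
include ha hb hc h

lemma sub_sq_pos_of_two_mul_eq : 0 < m * (b * c + 1) - c ^ 2 := by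
  by_contra! hq
  have hcmb : c ≤ m * b := by nlinarith [mul_nonpos_of_nonneg_of_nonpos hb hq]
  have hm : 0 < m := by
    by_contra! hm
    nlinarith [mul_nonpos_of_nonpos_of_nonneg hm hb]
  nlinarith [mul_le_mul_of_nonneg_right hcmb hc.le]

lemma sub_mul_add_one_pos_of_two_mul_eq : 0 < m * b ^ 2 - b * c + 1 := by
  have hq₁ := sub_sq_pos_of_two_mul_eq ha hb hc h
  by_contra! hq₂
  have hp : b * (m * (b * c + 1) - c ^ 2) - a ≤ 0 := by nlinarith
  have : 0 ≤ b * (m * (b * c + 1) - c ^ 2) := by positivity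
  nlinarith

end Positivity

theorem isPeriodicCF_period_four {x₀ x₁ x₂ : ℕ} (h0 : 0 < x₀) (h1 : 0 < x₁) (h2 : 0 < x₂)
    {α p q₁ q₂ : ℝ} (hα : 0 < α) (hq₁ : 0 < q₁) (hq₂ : 0 < q₂)
    (hα₁ : α ^ 2 = x₀ ^ 2 + q₁) (hp : p = x₁ * q₁ - x₀) (hp₂ : 2 * p = x₂ * q₂)
    (hα₂ : q₁ * q₂ = α ^ 2 - p ^ 2) :
    IsPeriodicCF x₀ [x₁, x₂, x₁, 2 * x₀] α := by
  have hp₀ : 0 < p := by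
    have : (0 : ℝ) < x₂ := by exact_mod_cast h2
    nlinarith
  have hx₀ : (0 : ℝ) ≤ x₀ := x₀.cast_nonneg
  apply isPeriodicCF_of_eq_add_inv x₀ _ [(α + x₀) / q₁, (α + p) / q₂, (α + p) / q₁, α + x₀]
    (List.cons_ne_nil _ _) rfl
  · simp only [List.mem_cons, List.not_mem_nil, or_false]
    omega
  · simp only [List.mem_cons, List.not_mem_nil, or_false]
    rintro τ (rfl | rfl | rfl | rfl) <;> positivity
  · simpa using add_div_eq_add_inv_add_div (P := 0) (Q := 1) one_ne_zero (by positivity)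
      (by ring) (by linarith)
  · intro i hi
    simp only [List.length_cons, List.length_nil] at hi
    interval_cases i <;> simp only [List.getD_cons_zero, List.getD_cons_succ, Nat.reduceAdd]
    · exact add_div_eq_add_inv_add_div hq₁.ne' (by positivity) hp hα₂
    · exact add_div_eq_add_inv_add_div hq₂.ne' (by positivity) (by linarith) (by linarith)
    · simpa using add_div_eq_add_inv_add_div hq₁.ne' (by positivity) (Q' := 1)
        (by linarith) (by linarith)
    · simpa using add_div_eq_add_inv_add_div (Q := 1) one_ne_zero (by positivity)
        (by ring) (by linarith)

theorem cf_value_period_four_general (m x₀ x₁ x₂ : ℕ)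
    (h0 : 0 < x₀) (h1 : 0 < x₁) (h2 : 0 < x₂)
    (heq : 2 * x₀ = m * (x₁ ^ 2 * x₂ + 2 * x₁) - x₂ * (x₁ * x₂ + 1))
    (heq' : x₂ * (x₁ * x₂ + 1) ≤ m * (x₁ ^ 2 * x₂ + 2 * x₁)) :
    IsPeriodicCF x₀ [x₁, x₂, x₁, 2 * x₀]
      (Real.sqrt ((x₀ ^ 2 + m * (x₁ * x₂ + 1) - x₂ ^ 2 : ℕ))) := by
  have hZ : 2 * (x₀ : ℤ) = m * (x₁ ^ 2 * x₂ + 2 * x₁) - x₂ * (x₁ * x₂ + 1) := by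
    simpa [Nat.cast_sub heq'] using congrArg (Nat.cast : ℕ → ℤ) heq
  have hc : (0 : ℤ) < x₂ := by exact_mod_cast h2
  have hq₁ : (0 : ℝ) < m * (x₁ * x₂ + 1) - x₂ ^ 2 := by
    exact_mod_cast sub_sq_pos_of_two_mul_eq x₀.cast_nonneg x₁.cast_nonneg hc hZ
  have hq₂ : (0 : ℝ) < m * x₁ ^ 2 - x₁ * x₂ + 1 := by
    exact_mod_cast sub_mul_add_one_pos_of_two_mul_eq x₀.cast_nonneg x₁.cast_nonneg hc hZ
  have hR : 2 * (x₀ : ℝ) = m * (x₁ ^ 2 * x₂ + 2 * x₁) - x₂ * (x₁ * x₂ + 1) := by exact_mod_cast hZ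
  have hD : ((x₀ ^ 2 + m * (x₁ * x₂ + 1) - x₂ ^ 2 : ℕ) : ℝ)
      = x₀ ^ 2 + (m * (x₁ * x₂ + 1) - x₂ ^ 2 : ℝ) := by
    have : x₂ ^ 2 ≤ m * (x₁ * x₂ + 1) := by exact_mod_cast (sub_pos.1 hq₁).le
    rw [Nat.cast_sub (le_add_left this)]
    push_cast
    ring
  have hD₀ : (0 : ℝ) < ((x₀ ^ 2 + m * (x₁ * x₂ + 1) - x₂ ^ 2 : ℕ) : ℝ) :=
    hD ▸ add_pos_of_nonneg_of_pos (sq_nonneg _) hq₁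
  refine isPeriodicCF_period_four h0 h1 h2 (Real.sqrt_pos.2 hD₀) hq₁ hq₂
    ((Real.sq_sqrt hD₀.le).trans hD) rfl ?_ ?_
  · linear_combination -hR
  · rw [Real.sq_sqrt hD₀.le, hD]
    linear_combination (-(x₁ : ℝ) * (m * (x₁ * x₂ + 1) - x₂ ^ 2)) * hR

theorem cf_value_period_four (m x₀ x₁ x₂ : ℕ)
    (hm : 0 < m) (h0 : 0 < x₀) (h1 : 0 < x₁) (h2 : 0 < x₂)
    (heq : 2 * x₀ = m * (x₁ ^ 2 * x₂ + 2 * x₁) - x₂ * (x₁ * x₂ + 1))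
    (heq' : x₂ * (x₁ * x₂ + 1) ≤ m * (x₁ ^ 2 * x₂ + 2 * x₁))
    (hpos : x₂ ^ 2 < x₀ ^ 2 + m * (x₁ * x₂ + 1))
    (hns : ¬ IsSquare (x₀ ^ 2 + m * (x₁ * x₂ + 1) - x₂ ^ 2)) :
    IsPeriodicCF x₀ [x₁, x₂, x₁, 2 * x₀]
      (Real.sqrt ((x₀ ^ 2 + m * (x₁ * x₂ + 1) - x₂ ^ 2 : ℕ))) :=
  cf_value_period_four_general m x₀ x₁ x₂ h0 h1 h2 heq heq'
end
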